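/- Let G=(V,E) be a finite connected graph with m edges, let w_{0,e}>0 be initial weights, fix θ>1, α∈[0,1] and a step size s with 0<s<1. Define iterates by w_e^{(0)}=w_{0,e} and w_e^{(j+1)} = w_e^{(j)} − s·κ_e^{(j)}·w_e^{(j)}, where κ_e^{(j)} is Ollivier's α-Ricci curvature of the edge e computed from the weights w^{(j)}, and assume that at every step j and every edge e the θ-surgery condition w_e^{(j)}/ρ_e^{(j)} ≤ θ holds, where ρ_e^{(j)} is the distance of the endpoints of e in the weights w^{(j)}. Then every iterate is strictly positive (so the flow has a unique global solution) and for all j∈ℕ and all e∈E: (1−s)^j·w_{0,e} ≤ w_e^{(j)} ≤ (1−s+mθs)^j·∑_{τ∈E} w_{0,τ}. -/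

import Mathlib

open Finset

section RicciDefs

variable {V : Type*}

/-- The sum of the weights of the edges of a walk. -/
noncomputable def walkWeight {G : SimpleGraph V} (w : Sym2 V → ℝ) {u v : V} (p : G.Walk u v) : ℝ :=
  (p.edges.map w).sum

/-- The weighted graph distance: infimum of total weight over walks joining `u` and `v`. -/
noncomputable def gdist (G : SimpleGraph V) (w : Sym2 V → ℝ) (u v : V) : ℝ :=
  sInf {x : ℝ | ∃ p : G.Walk u v, x = walkWeight w p}

/-- A choice of ordered endpoints of an unordered pair. -/
noncomputable def endpoints (e : Sym2 V) : V × V := Quot.out e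

/-- The weighted distance between the endpoints of an edge. -/
noncomputable def edist (G : SimpleGraph V) (w : Sym2 V → ℝ) (e : Sym2 V) : ℝ :=
  gdist G w (endpoints e).1 (endpoints e).2

/-- The `α`-lazy one-step random walk at `x`. -/
noncomputable def lazyWalk (G : SimpleGraph V) [Fintype V] [DecidableEq V] [DecidableRel G.Adj]
    (w : Sym2 V → ℝ) (α : ℝ) (x : V) : V → ℝ := fun z =>
  if z = x then α
  else if G.Adj x z then (1 - α) * w s(x, z) / ∑ u ∈ G.neighborFinset x, w s(x, u)
  else 0

/-- A probability measure on a finite vertex set. -/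
def IsProbMeasure [Fintype V] (μ : V → ℝ) : Prop :=
  (∀ x, 0 ≤ μ x) ∧ ∑ x, μ x = 1

/-- A coupling between two probability measures. -/
def IsCoupling [Fintype V] (μ₁ μ₂ : V → ℝ) (A : V → V → ℝ) : Prop :=
  (∀ u v, A u v ∈ Set.Icc (0 : ℝ) 1) ∧ (∀ u, ∑ x, A u x = μ₁ u) ∧ (∀ v, ∑ y, A y v = μ₂ v)

/-- The Wasserstein distance between two probability measures. -/
noncomputable def wasserstein [Fintype V] (G : SimpleGraph V) (w : Sym2 V → ℝ)
    (μ₁ μ₂ : V → ℝ) : ℝ :=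
  sInf {x : ℝ | ∃ A : V → V → ℝ, IsCoupling μ₁ μ₂ A ∧ x = ∑ u, ∑ v, A u v * gdist G w u v}

/-- Ollivier's `α`-Ricci curvature of an edge. -/
noncomputable def ollivier [Fintype V] [DecidableEq V] (G : SimpleGraph V) [DecidableRel G.Adj]
    (w : Sym2 V → ℝ) (α : ℝ) (e : Sym2 V) : ℝ :=
  1 - wasserstein G w (lazyWalk G w α (endpoints e).1) (lazyWalk G w α (endpoints e).2)
        / edist G w e

end RicciDefs

section FlowHelpers

variable {V : Type*}

lemma walkWeight_nonneg {G : SimpleGraph V} {w : Sym2 V → ℝ}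
    (hw : ∀ e ∈ G.edgeSet, 0 ≤ w e) {u v : V} (p : G.Walk u v) :
    0 ≤ walkWeight w p := by
  apply List.sum_nonneg
  intro x hx
  obtain ⟨e, he, rfl⟩ := List.mem_map.mp hx
  exact hw e (p.edges_subset_edgeSet he)

lemma gdist_nonneg' {G : SimpleGraph V} {w : Sym2 V → ℝ}
    (hw : ∀ e ∈ G.edgeSet, 0 ≤ w e) (u v : V) : 0 ≤ gdist G w u v :=
  Real.sInf_nonneg (by rintro x ⟨p, rfl⟩; exact walkWeight_nonneg hw p)

lemma gdist_le_walkWeight {G : SimpleGraph V} {w : Sym2 V → ℝ}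
    (hw : ∀ e ∈ G.edgeSet, 0 ≤ w e) {u v : V} (p : G.Walk u v) :
    gdist G w u v ≤ walkWeight w p :=
  csInf_le ⟨0, by rintro x ⟨q, rfl⟩; exact walkWeight_nonneg hw q⟩ ⟨p, rfl⟩

lemma gdist_le_total' [Fintype V] [DecidableEq V] {G : SimpleGraph V} [DecidableRel G.Adj]
    {w : Sym2 V → ℝ} (hw : ∀ e ∈ G.edgeSet, 0 ≤ w e) (hconn : G.Connected) (u v : V) :
    gdist G w u v ≤ ∑ τ ∈ G.edgeFinset, w τ := by
  obtain ⟨p⟩ := hconn.preconnected u v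
  refine (gdist_le_walkWeight hw (p.toPath : G.Walk u v)).trans ?_
  have hnd : (p.toPath : G.Walk u v).edges.Nodup := p.toPath.2.edges_nodup
  show ((p.toPath : G.Walk u v).edges.map w).sum ≤ _
  rw [← List.sum_toFinset _ hnd]
  apply Finset.sum_le_sum_of_subset_of_nonneg
  · intro τ hτ
    rw [List.mem_toFinset] at hτ
    exact SimpleGraph.mem_edgeFinset.mpr ((p.toPath : G.Walk u v).edges_subset_edgeSet hτ)
  · intro τ hτ _
    exact hw τ (SimpleGraph.mem_edgeFinset.mp hτ)

lemma gdist_pos [Fintype V] [DecidableEq V] {G : SimpleGraph V} [DecidableRel G.Adj]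
    {w : Sym2 V → ℝ} (hw : ∀ e ∈ G.edgeFinset, 0 < w e) {a b : V} (hab : G.Adj a b) :
    0 < gdist G w a b := by
  have hne : G.edgeFinset.Nonempty := ⟨s(a,b), SimpleGraph.mem_edgeFinset.mpr hab⟩
  set c := G.edgeFinset.inf' hne w with hc
  have hcpos : 0 < c := by
    rw [hc, Finset.lt_inf'_iff]
    exact hw
  have hwnn : ∀ e ∈ G.edgeSet, 0 ≤ w e := fun e he =>
    (hw e (SimpleGraph.mem_edgeFinset.mpr he)).le
  have hlb : ∀ x ∈ {x : ℝ | ∃ p : G.Walk a b, x = walkWeight w p}, c ≤ x := by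
    rintro x ⟨p, rfl⟩
    cases p with
    | nil => exact absurd rfl hab.ne
    | cons h q =>
      show c ≤ (List.map w (SimpleGraph.Walk.cons h q).edges).sum
      rw [SimpleGraph.Walk.edges_cons, List.map_cons, List.sum_cons]
      have h1 : c ≤ w s(a, _) := Finset.inf'_le w (SimpleGraph.mem_edgeFinset.mpr h)
      have h2 : (0:ℝ) ≤ (List.map w q.edges).sum := walkWeight_nonneg hwnn q
      linarith
  calc (0:ℝ) < c := hcpos
    _ ≤ gdist G w a b := le_csInf ⟨walkWeight w (SimpleGraph.Walk.cons hab SimpleGraph.Walk.nil), _, rfl⟩ hlb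

lemma lazyWalk_prob [Fintype V] [DecidableEq V] {G : SimpleGraph V} [DecidableRel G.Adj]
    {w : Sym2 V → ℝ} (hw : ∀ e ∈ G.edgeSet, 0 < w e) {α : ℝ} (hα : α ∈ Set.Icc (0:ℝ) 1)
    {x : V} (hx : (G.neighborFinset x).Nonempty) :
    IsProbMeasure (lazyWalk G w α x) := by
  set D := ∑ u ∈ G.neighborFinset x, w s(x, u) with hD
  have hDpos : 0 < D := by
    apply Finset.sum_pos _ hx
    intro u hu
    exact hw _ ((SimpleGraph.mem_neighborFinset _ _ _).mp hu)
  constructor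
  · intro z
    unfold lazyWalk
    split_ifs with h1 h2
    · exact hα.1
    · have hwz : 0 < w s(x, z) := hw _ h2
      have h1α : (0:ℝ) ≤ 1 - α := by linarith [hα.2]
      exact div_nonneg (mul_nonneg h1α hwz.le) hDpos.le
    · exact le_refl 0
  · have key : ∀ z : V, lazyWalk G w α x z =
        (if z = x then α else 0) + (if z ∈ G.neighborFinset x then (1 - α) * w s(x, z) / D else 0) := by
      intro z
      unfold lazyWalk
      by_cases h1 : z = x
      · subst h1
        simp [SimpleGraph.irrefl]
      · simp only [h1, if_false, SimpleGraph.mem_neighborFinset, zero_add, ← hD]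
    rw [Finset.sum_congr rfl (fun z _ => key z), Finset.sum_add_distrib]
    rw [Finset.sum_ite_eq' Finset.univ x (fun _ => α)]
    rw [Finset.sum_ite_mem, Finset.univ_inter]
    have : ∑ z ∈ G.neighborFinset x, (1 - α) * w s(x, z) / D = (1 - α) * D / D := by
      rw [← Finset.sum_div, ← Finset.mul_sum]
    rw [this, mul_div_assoc, div_self hDpos.ne', mul_one]
    simp

lemma wasserstein_nonneg [Fintype V] {G : SimpleGraph V}
    {w : Sym2 V → ℝ} (hw : ∀ e ∈ G.edgeSet, 0 ≤ w e) (μ₁ μ₂ : V → ℝ) :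
    0 ≤ wasserstein G w μ₁ μ₂ := by
  apply Real.sInf_nonneg
  rintro x ⟨A, hA, rfl⟩
  apply Finset.sum_nonneg; intro u _
  apply Finset.sum_nonneg; intro v _
  exact mul_nonneg (hA.1 u v).1 (gdist_nonneg' hw u v)

lemma wasserstein_le_total [Fintype V] [DecidableEq V] {G : SimpleGraph V} [DecidableRel G.Adj]
    {w : Sym2 V → ℝ} (hw : ∀ e ∈ G.edgeSet, 0 ≤ w e) (hconn : G.Connected)
    {μ₁ μ₂ : V → ℝ} (h1 : IsProbMeasure μ₁) (h2 : IsProbMeasure μ₂) :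
    wasserstein G w μ₁ μ₂ ≤ ∑ τ ∈ G.edgeFinset, w τ := by
  set T := ∑ τ ∈ G.edgeFinset, w τ with hT
  have hle1 : ∀ u, μ₁ u ≤ 1 := fun u => by
    rw [← h1.2]; exact Finset.single_le_sum (fun z _ => h1.1 z) (Finset.mem_univ u)
  have hle2 : ∀ v, μ₂ v ≤ 1 := fun v => by
    rw [← h2.2]; exact Finset.single_le_sum (fun z _ => h2.1 z) (Finset.mem_univ v)
  have hcoup : IsCoupling μ₁ μ₂ (fun u v => μ₁ u * μ₂ v) := by
    refine ⟨fun u v => ⟨mul_nonneg (h1.1 u) (h2.1 v), mul_le_one₀ (hle1 u) (h2.1 v) (hle2 v)⟩, ?_, ?_⟩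
    · intro u; rw [← Finset.mul_sum, h2.2, mul_one]
    · intro v; rw [← Finset.sum_mul, h1.2, one_mul]
  have hmem : (∑ u, ∑ v, μ₁ u * μ₂ v * gdist G w u v) ∈
      {x : ℝ | ∃ A : V → V → ℝ, IsCoupling μ₁ μ₂ A ∧ x = ∑ u, ∑ v, A u v * gdist G w u v} :=
    ⟨_, hcoup, rfl⟩
  have hbdd : BddBelow {x : ℝ | ∃ A : V → V → ℝ, IsCoupling μ₁ μ₂ A ∧ x = ∑ u, ∑ v, A u v * gdist G w u v} := by
    refine ⟨0, ?_⟩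
    rintro x ⟨A, hA, rfl⟩
    apply Finset.sum_nonneg; intro u _
    apply Finset.sum_nonneg; intro v _
    exact mul_nonneg (hA.1 u v).1 (gdist_nonneg' hw u v)
  refine (csInf_le hbdd hmem).trans ?_
  calc ∑ u, ∑ v, μ₁ u * μ₂ v * gdist G w u v
      ≤ ∑ u, ∑ v, μ₁ u * μ₂ v * T := by
        apply Finset.sum_le_sum; intro u _
        apply Finset.sum_le_sum; intro v _
        exact mul_le_mul_of_nonneg_left (gdist_le_total' hw hconn u v)
          (mul_nonneg (h1.1 u) (h2.1 v))
    _ = T := by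
        simp only [← Finset.sum_mul]
        have h : ∑ u, ∑ v, μ₁ u * μ₂ v = 1 := by
          rw [Finset.sum_congr rfl (fun u _ => by rw [← Finset.mul_sum, h2.2, mul_one]), h1.2]
        rw [h, one_mul]

end FlowHelpers

/-- Theorem 2.3 (i): bounds for the discrete Ricci curvature flow
`w' = w − s·κ·w` with Ollivier's curvature, under the θ-surgery condition. -/
theorem ollivier_flow_surgery_bounds {V : Type*} [Fintype V] [DecidableEq V]
    (G : SimpleGraph V) [DecidableRel G.Adj] (hconn : G.Connected)
    (m : ℕ) (hm : G.edgeFinset.card = m)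
    (θ : ℝ) (hθ : 1 < θ)
    (α : ℝ) (hα : α ∈ Set.Icc (0 : ℝ) 1)
    (s : ℝ) (hs0 : 0 < s) (hs1 : s < 1)
    (w : ℕ → Sym2 V → ℝ)
    (hpos0 : ∀ e ∈ G.edgeFinset, 0 < w 0 e)
    (hflow : ∀ j : ℕ, ∀ e ∈ G.edgeFinset,
      w (j + 1) e = w j e - s * ollivier G (w j) α e * w j e)
    -- θ-surgery condition at every step
    (hsurg : ∀ j : ℕ, ∀ e ∈ G.edgeFinset, w j e / edist G (w j) e ≤ θ) :
    ∀ j : ℕ, ∀ e ∈ G.edgeFinset,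
      0 < w j e ∧
      (1 - s) ^ j * w 0 e ≤ w j e ∧
      w j e ≤ (1 - s + (m : ℝ) * θ * s) ^ j * ∑ τ ∈ G.edgeFinset, w 0 τ := by
  intro j
  induction j with
  | zero =>
    intro e he
    refine ⟨hpos0 e he, by simp, ?_⟩
    simp only [pow_zero, one_mul]
    exact Finset.single_le_sum (fun τ hτ => (hpos0 τ hτ).le) he
  | succ j ih =>
    have hpos : ∀ e ∈ G.edgeFinset, 0 < w j e := fun e he => (ih e he).1
    have hposS : ∀ e ∈ G.edgeSet, 0 < w j e := fun e he =>
      hpos e (SimpleGraph.mem_edgeFinset.mpr he)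
    have hnn : ∀ e ∈ G.edgeSet, 0 ≤ w j e := fun e he => (hposS e he).le
    have hSum0 : (0:ℝ) ≤ ∑ τ ∈ G.edgeFinset, w 0 τ :=
      Finset.sum_nonneg (fun τ hτ => (hpos0 τ hτ).le)
    have hθ0 : (0:ℝ) < θ := by linarith
    have hmθs : (0:ℝ) ≤ (m:ℝ) * θ * s := by positivity
    have hKpos : (0:ℝ) < 1 - s + (m:ℝ) * θ * s := by linarith
    have hX : (0:ℝ) ≤ (1 - s + (m:ℝ) * θ * s) ^ j * ∑ τ ∈ G.edgeFinset, w 0 τ :=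
      mul_nonneg (pow_nonneg hKpos.le j) hSum0
    intro e he
    have hab : s((endpoints e).1, (endpoints e).2) = e := by
      show Quot.mk (Sym2.Rel V) ((Quot.out e : V × V).1, (Quot.out e : V × V).2) = e
      rw [Prod.mk.eta]; exact Quot.out_eq e
    have hadj : G.Adj (endpoints e).1 (endpoints e).2 :=
      G.mem_edgeSet.mp (by rw [hab]; exact SimpleGraph.mem_edgeFinset.mp he)
    have hρ : 0 < edist G (w j) e := gdist_pos hpos hadj
    have hna : (G.neighborFinset (endpoints e).1).Nonempty :=
      ⟨(endpoints e).2, (SimpleGraph.mem_neighborFinset _ _ _).mpr hadj⟩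
    have hnb : (G.neighborFinset (endpoints e).2).Nonempty :=
      ⟨(endpoints e).1, (SimpleGraph.mem_neighborFinset _ _ _).mpr hadj.symm⟩
    have hp1 := lazyWalk_prob hposS hα hna
    have hp2 := lazyWalk_prob hposS hα hnb
    set Wd := wasserstein G (w j) (lazyWalk G (w j) α (endpoints e).1)
      (lazyWalk G (w j) α (endpoints e).2) with hWdef
    have hW0 : 0 ≤ Wd := wasserstein_nonneg hnn _ _
    have hWle : Wd ≤ ∑ τ ∈ G.edgeFinset, w j τ := wasserstein_le_total hnn hconn hp1 hp2
    have hTm : ∑ τ ∈ G.edgeFinset, w j τ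
        ≤ (m:ℝ) * ((1 - s + (m:ℝ) * θ * s) ^ j * ∑ τ ∈ G.edgeFinset, w 0 τ) := by
      calc ∑ τ ∈ G.edgeFinset, w j τ
          ≤ ∑ _τ ∈ G.edgeFinset, (1 - s + (m:ℝ) * θ * s) ^ j * ∑ τ ∈ G.edgeFinset, w 0 τ :=
            Finset.sum_le_sum (fun τ hτ => (ih τ hτ).2.2)
        _ = (m:ℝ) * ((1 - s + (m:ℝ) * θ * s) ^ j * ∑ τ ∈ G.edgeFinset, w 0 τ) := by
            rw [Finset.sum_const, hm, nsmul_eq_mul]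
    have hκ : ollivier G (w j) α e = 1 - Wd / edist G (w j) e := rfl
    have hwa : 0 < w j e := hpos e he
    have hstep : w (j+1) e = (1 - s) * w j e + s * (w j e / edist G (w j) e * Wd) := by
      rw [hflow j e he, hκ]
      field_simp
      ring
    have hsecond : 0 ≤ s * (w j e / edist G (w j) e * Wd) := by positivity
    refine ⟨?_, ?_, ?_⟩
    · rw [hstep]
      have : 0 < (1 - s) * w j e := mul_pos (by linarith) hwa
      linarith
    · rw [hstep, pow_succ]
      have h1 : (1 - s) ^ j * (1 - s) * w 0 e = (1 - s) * ((1 - s) ^ j * w 0 e) := by ring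
      have h2 : (1 - s) * ((1 - s) ^ j * w 0 e) ≤ (1 - s) * w j e :=
        mul_le_mul_of_nonneg_left (ih e he).2.1 (by linarith)
      linarith
    · rw [hstep, pow_succ]
      have h1 : w j e ≤ (1 - s + (m:ℝ) * θ * s) ^ j * ∑ τ ∈ G.edgeFinset, w 0 τ := (ih e he).2.2
      have h2 : w j e / edist G (w j) e * Wd
          ≤ θ * ((m:ℝ) * ((1 - s + (m:ℝ) * θ * s) ^ j * ∑ τ ∈ G.edgeFinset, w 0 τ)) :=
        mul_le_mul (hsurg j e he) (hWle.trans hTm) hW0 hθ0.le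
      have h3 : s * (w j e / edist G (w j) e * Wd)
          ≤ s * (θ * ((m:ℝ) * ((1 - s + (m:ℝ) * θ * s) ^ j * ∑ τ ∈ G.edgeFinset, w 0 τ))) :=
        mul_le_mul_of_nonneg_left h2 hs0.le
      have h4 : (1 - s) * w j e
          ≤ (1 - s) * ((1 - s + (m:ℝ) * θ * s) ^ j * ∑ τ ∈ G.edgeFinset, w 0 τ) :=
        mul_le_mul_of_nonneg_left h1 (by linarith)
      nlinarith [hX]
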